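/- arXiv:1404.4335 — 3 statements merged into one kernel-verified Lean document; each statement's English description precedes it below -/
import Mathlib

section
/- Let P : ℕ → ℝ be a positive function satisfying P(m+n) ≤ C · P(m) · P(n) for all m, n and some constant C ≥ 1. Define δ = limsup_{r→∞} (log P(r))/r and assume δ is finite. Then the series ∑_{r=0}^∞ P(r) e^{−rδ} diverges. -/
/-!
Since `P (m + n) ≤ C P m P n`, the sequence `u n = log C + log P n` is subadditive, so by Fekete's
lemma `u n / n` converges to `L = inf_{n ≥ 1} u n / n`; as `log C / n → 0`, also `log P n / n → L`,
whence `δ = L`. The infimum gives `n δ ≤ log C + log P n`, i.e. `P n e^{-nδ} ≥ C⁻¹` for all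
`n ≥ 1`, so the terms of the series do not tend to zero.
-/

open Filter Real Set Topology

lemma not_summable_of_eventually_const_le {f : ℕ → ℝ} {c : ℝ} (hc : 0 < c)
    (h : ∀ᶠ n in atTop, c ≤ f n) : ¬ Summable f := fun hf =>
  (ge_of_tendsto hf.tendsto_atTop_zero h).not_gt hc

section SubmultiplicativeUpToConstant

variable {P : ℕ → ℝ} {C : ℝ}

lemma subadditive_log_const_add_log (hC : 0 < C) (hP : ∀ r, 0 < P r)
    (hsub : ∀ m n, P (m + n) ≤ C * P m * P n) :
    Subadditive fun n => log C + log (P n) := by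
  intro m n
  have h := log_le_log (hP _) (hsub m n)
  rw [log_mul (mul_pos hC (hP m)).ne' (hP n).ne', log_mul hC.ne' (hP m).ne'] at h
  linarith

lemma exists_tendsto_log_div_forall_exp_le (hC : 1 ≤ C) (hP : ∀ r, 0 < P r)
    (hsub : ∀ m n, P (m + n) ≤ C * P m * P n)
    (hbdd : BddBelow (range fun n : ℕ => log (P n) / n)) :
    ∃ L, Tendsto (fun n : ℕ => log (P n) / n) atTop (𝓝 L) ∧
      ∀ n : ℕ, n ≠ 0 → exp (n * L) ≤ C * P n := by
  have hC0 : 0 < C := one_pos.trans_le hC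
  have hu := subadditive_log_const_add_log hC0 hP hsub
  have hubdd : BddBelow (range fun n : ℕ => (log C + log (P n)) / n) :=
    hbdd.range_mono _ fun n => by
      rw [add_div]
      exact le_add_of_nonneg_left (div_nonneg (log_nonneg hC) n.cast_nonneg)
  refine ⟨hu.lim, ?_, fun n hn => ?_⟩
  · have hlogC : Tendsto (fun n : ℕ => log C / n) atTop (𝓝 0) :=
      tendsto_const_nhds.div_atTop tendsto_natCast_atTop_atTop
    simpa only [add_div, add_sub_cancel_left, sub_zero] using (hu.tendsto_lim hubdd).sub hlogC
  · have hn' : (0 : ℝ) < n := Nat.cast_pos.2 (Nat.pos_of_ne_zero hn)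
    have hle : n * hu.lim ≤ log C + log (P n) :=
      (le_div_iff₀' hn').1 (hu.lim_le_div hubdd hn)
    calc exp (n * hu.lim) ≤ exp (log C + log (P n)) := exp_le_exp.2 hle
      _ = C * P n := by rw [exp_add, exp_log hC0, exp_log (hP n)]

end SubmultiplicativeUpToConstant

theorem divergent_at_critical_exponent_general
    (P : ℕ → ℝ) (C : ℝ) (hC : 1 ≤ C)
    (hP : ∀ r, 0 < P r)
    (hsub : ∀ m n : ℕ, P (m + n) ≤ C * P m * P n)
    (hbddB : BddBelow (Set.range fun r : ℕ => Real.log (P r) / r))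
    (δ : ℝ)
    (hδ : δ = Filter.limsup (fun r : ℕ => Real.log (P r) / r) Filter.atTop) :
    ¬ Summable (fun r : ℕ => P r * Real.exp (-(r : ℝ) * δ)) := by
  obtain ⟨L, hlim, hexp⟩ := exists_tendsto_log_div_forall_exp_le hC hP hsub hbddB
  obtain rfl : δ = L := hδ ▸ hlim.limsup_eq
  have hC0 : 0 < C := one_pos.trans_le hC
  refine not_summable_of_eventually_const_le (inv_pos.2 hC0) ?_
  filter_upwards [eventually_ne_atTop 0] with n hn
  rw [neg_mul, exp_neg, ← div_eq_mul_inv, le_div_iff₀ (exp_pos _), inv_mul_le_iff₀ hC0]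
  exact hexp n hn

/-- If `P` is positive and submultiplicative up to a constant `C ≥ 1`, and
`δ = limsup (log P r) / r` is finite (the sequence `log P r / r` is bounded),
then the series `∑ P r · e^{−rδ}` diverges. -/
theorem divergent_at_critical_exponent
    (P : ℕ → ℝ) (C : ℝ) (hC : 1 ≤ C)
    (hP : ∀ r, 0 < P r)
    (hsub : ∀ m n : ℕ, P (m + n) ≤ C * P m * P n)
    (hbddA : BddAbove (Set.range fun r : ℕ => Real.log (P r) / r))
    (hbddB : BddBelow (Set.range fun r : ℕ => Real.log (P r) / r))
    (δ : ℝ)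
    (hδ : δ = Filter.limsup (fun r : ℕ => Real.log (P r) / r) Filter.atTop) :
    ¬ Summable (fun r : ℕ => P r * Real.exp (-(r : ℝ) * δ)) :=
  divergent_at_critical_exponent_general P C hC hP hsub hbddB δ hδ
end

section
/- Let A₁,…,Aₙ be sets with basepoints, each with a counting function P_i(r) (number of points of A_i at distance ≤ r from the basepoint) whose growth exponent is δᵢ ≥ 0. Give the product A = A₁ × ⋯ × Aₙ the L^1 metric d(x,y) = ∑ᵢ dᵢ(xᵢ,yᵢ), and assume each log P_i is subadditive up to a bounded error. Then the growth exponent of A equals max(δ₁,…,δₙ). -/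
open Filter Metric Real Set

lemma l1prod_count_aux
    (n : ℕ) (X : Fin n → Type*) [∀ i, PseudoMetricSpace (X i)]
    (o : ∀ i, X i) (A : ∀ i, Set (X i))
    (hfin : ∀ i (r : ℝ), (A i ∩ Metric.closedBall (o i) r).Finite)
    (r : ℝ) (B : ℝ) (hB0 : 0 ≤ B)
    (hB : ∀ m : Fin n → ℕ, (∑ i, (m i : ℝ)) ≤ r + n →
      (∏ i, ((A i ∩ Metric.closedBall (o i) (m i : ℝ)).ncard : ℝ)) ≤ B) :
    (({x : ∀ i, X i | (∀ i, x i ∈ A i) ∧ ∑ i, dist (o i) (x i) ≤ r}).ncard : ℝ)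
      ≤ ((⌈r⌉₊ + 1) ^ n : ℕ) * B := by
  classical
  set S : Set (∀ i, X i) :=
    {x : ∀ i, X i | (∀ i, x i ∈ A i) ∧ ∑ i, dist (o i) (x i) ≤ r} with hS
  have hdist : ∀ x ∈ S, ∀ i, dist (o i) (x i) ≤ r := by
    intro x hx i
    exact le_trans (Finset.single_le_sum (fun j _ => dist_nonneg) (Finset.mem_univ i)) hx.2
  have hSfin : S.Finite := by
    apply (Set.Finite.pi (fun i => hfin i r)).subset
    intro x hx
    exact fun i _ => ⟨hx.1 i, Metric.mem_closedBall'.2 (hdist x hx i)⟩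
  set Ffin : (Fin n → ℕ) → Finset (∀ i, X i) :=
    fun m => Fintype.piFinset (fun i => (hfin i (m i)).toFinset) with hFfin
  set T : Finset (Fin n → ℕ) :=
    (Finset.Iic fun _ => ⌈r⌉₊).filter (fun m => (∑ i, (m i : ℝ)) ≤ r + n) with hT
  have hcover : hSfin.toFinset ⊆ T.biUnion Ffin := by
    intro x hx
    rw [Set.Finite.mem_toFinset] at hx
    refine Finset.mem_biUnion.2 ⟨fun i => ⌈dist (o i) (x i)⌉₊, ?_, ?_⟩
    · refine Finset.mem_filter.2 ⟨Finset.mem_Iic.2 (fun i => Nat.ceil_le_ceil (hdist x hx i)), ?_⟩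
      calc (∑ i, ((⌈dist (o i) (x i)⌉₊ : ℝ)))
          ≤ ∑ i, (dist (o i) (x i) + 1) :=
            Finset.sum_le_sum (fun i _ => le_of_lt (Nat.ceil_lt_add_one dist_nonneg))
        _ = (∑ i, dist (o i) (x i)) + n := by
            rw [Finset.sum_add_distrib]; simp
        _ ≤ r + n := by linarith [hx.2]
    · refine Fintype.mem_piFinset.2 (fun i => ?_)
      rw [Set.Finite.mem_toFinset]
      exact ⟨hx.1 i, Metric.mem_closedBall'.2 (Nat.le_ceil _)⟩
  have hcard : S.ncard ≤ ∑ m ∈ T, (Ffin m).card := by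
    rw [Set.ncard_eq_toFinset_card S hSfin]
    calc hSfin.toFinset.card
        ≤ (T.biUnion Ffin).card := Finset.card_le_card hcover
      _ ≤ ∑ m ∈ T, (Ffin m).card := Finset.card_biUnion_le
  have hterm : ∀ m ∈ T, ((Ffin m).card : ℝ) ≤ B := by
    intro m hm
    have hmem := Finset.mem_filter.1 hm
    have : (Ffin m).card = ∏ i, (A i ∩ Metric.closedBall (o i) (m i : ℝ)).ncard := by
      rw [hFfin, Fintype.card_piFinset]
      exact Finset.prod_congr rfl (fun i _ =>
        (Set.ncard_eq_toFinset_card _ (hfin i (m i))).symm)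
    rw [this]
    push_cast
    exact hB m hmem.2
  calc (S.ncard : ℝ) ≤ ((∑ m ∈ T, (Ffin m).card : ℕ) : ℝ) := by exact_mod_cast hcard
    _ = ∑ m ∈ T, ((Ffin m).card : ℝ) := by push_cast; ring
    _ ≤ ∑ _m ∈ T, B := Finset.sum_le_sum hterm
    _ = T.card * B := by rw [Finset.sum_const, nsmul_eq_mul]
    _ ≤ ((⌈r⌉₊ + 1) ^ n : ℕ) * B := by
        apply mul_le_mul_of_nonneg_right _ hB0
        have h1 : T.card ≤ (Finset.Iic fun _ : Fin n => ⌈r⌉₊).card := Finset.card_filter_le _ _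
        have h2 : (Finset.Iic fun _ : Fin n => ⌈r⌉₊).card = (⌈r⌉₊ + 1) ^ n := by
          simp [Pi.card_Iic]
        exact_mod_cast h2 ▸ h1

lemma l1prod_lower_aux
    (n : ℕ) (X : Fin n → Type*) [∀ i, PseudoMetricSpace (X i)]
    (o : ∀ i, X i) (A : ∀ i, Set (X i))
    (hfin : ∀ i (r : ℝ), (A i ∩ Metric.closedBall (o i) r).Finite)
    (a : ∀ j, X j) (ha : ∀ j, a j ∈ A j ∩ Metric.closedBall (o j) 0)
    (i : Fin n) (r : ℝ) :
    (A i ∩ Metric.closedBall (o i) r).ncard ≤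
      ({x : ∀ i, X i | (∀ i, x i ∈ A i) ∧ ∑ i, dist (o i) (x i) ≤ r}).ncard := by
  classical
  set S : Set (∀ i, X i) :=
    {x : ∀ i, X i | (∀ i, x i ∈ A i) ∧ ∑ i, dist (o i) (x i) ≤ r} with hS
  have hdista : ∀ j, dist (o j) (a j) = 0 := fun j =>
    le_antisymm (Metric.mem_closedBall'.1 (ha j).2) dist_nonneg
  have hSfin : S.Finite := by
    apply (Set.Finite.pi (fun i => hfin i r)).subset
    intro x hx
    refine fun j _ => ⟨hx.1 j, Metric.mem_closedBall'.2 ?_⟩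
    exact le_trans (Finset.single_le_sum (fun j _ => dist_nonneg) (Finset.mem_univ j)) hx.2
  have himg : (fun x => Function.update a i x) '' (A i ∩ Metric.closedBall (o i) r) ⊆ S := by
    rintro _ ⟨x, hx, rfl⟩
    constructor
    · intro j
      rcases eq_or_ne j i with rfl | hj
      · simpa using hx.1
      · simpa [Function.update_of_ne hj] using (ha j).1
    · have : ∑ j, dist (o j) (Function.update a i x j) = dist (o i) x := by
        rw [Finset.sum_eq_single_of_mem i (Finset.mem_univ i)]
        · simp
        · intro j _ hj
          simp [Function.update_of_ne hj, hdista j]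
      simpa [Set.mem_setOf_eq, this] using Metric.mem_closedBall'.1 hx.2
  calc (A i ∩ Metric.closedBall (o i) r).ncard
      = ((fun x => Function.update a i x) '' (A i ∩ Metric.closedBall (o i) r)).ncard :=
        (Set.ncard_image_of_injective _ (Function.update_injective a i)).symm
    _ ≤ S.ncard := Set.ncard_le_ncard himg hSfin

lemma lin_of_subadd (g : ℝ → ℝ) (b : ℝ)
    (hmono : ∀ s t : ℝ, 0 ≤ s → s ≤ t → g s ≤ g t)
    (hsub : ∀ m m' : ℝ, 0 ≤ m → 0 ≤ m' → g (m + m') ≤ g m + g m' + b)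
    (r : ℝ) (hr : 0 ≤ r) : g r ≤ (r + 1) * (g 1 + b) + g 0 := by
  have h0 : 0 ≤ g 0 + b := by have := hsub 0 0 le_rfl le_rfl; simp at this; linarith
  have h1 : 0 ≤ g 1 + b := by have := hmono 0 1 le_rfl zero_le_one; linarith
  have hnat : ∀ k : ℕ, g k + b ≤ k * (g 1 + b) + (g 0 + b) := by
    intro k
    induction k with
    | zero => simp
    | succ k ih =>
        have := hsub k 1 (Nat.cast_nonneg k) zero_le_one
        push_cast
        push_cast at ih
        nlinarith
  have hceil := hnat ⌈r⌉₊
  have hle : g r ≤ g ⌈r⌉₊ := hmono r ⌈r⌉₊ hr (Nat.le_ceil r)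
  have hcr : (⌈r⌉₊ : ℝ) ≤ r + 1 := le_of_lt (Nat.ceil_lt_add_one hr)
  nlinarith

/-- Growth exponent of an `L^1` product: if each set `Aᵢ` (in a pseudo-metric
space with basepoint `oᵢ`) has counting function `Pᵢ(r) = #(Aᵢ ∩ B̄(oᵢ, r))`
with growth exponent `δᵢ ≥ 0`, and each `log Pᵢ` is subadditive up to the
bounded error `b`, then the growth exponent of `A₁ × ⋯ × Aₙ` with respect to
the `L^1` metric `d(x,y) = ∑ᵢ dᵢ(xᵢ,yᵢ)` equals `max (δ₁, …, δₙ)`. -/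
theorem l1_product_growth_exponent
    (n : ℕ) (hn : 0 < n) (X : Fin n → Type*) [∀ i, PseudoMetricSpace (X i)]
    (o : ∀ i, X i) (A : ∀ i, Set (X i))
    (hfin : ∀ i (r : ℝ), (A i ∩ Metric.closedBall (o i) r).Finite)
    (hone : ∀ i (r : ℝ), 0 ≤ r →
      1 ≤ ((A i ∩ Metric.closedBall (o i) r).ncard : ℝ))
    (δ : Fin n → ℝ) (hδ : ∀ i, 0 ≤ δ i)
    (hgrowth : ∀ i, Filter.limsup
      (fun r : ℝ => Real.log ((A i ∩ Metric.closedBall (o i) r).ncard : ℝ) / r)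
      Filter.atTop = δ i)
    (b : ℝ)
    (hsub : ∀ i, ∀ m m' : ℝ, 0 ≤ m → 0 ≤ m' →
      Real.log ((A i ∩ Metric.closedBall (o i) (m + m')).ncard : ℝ) ≤
        Real.log ((A i ∩ Metric.closedBall (o i) m).ncard : ℝ) +
        Real.log ((A i ∩ Metric.closedBall (o i) m').ncard : ℝ) + b) :
    Filter.limsup (fun r : ℝ =>
        Real.log (({x : ∀ i, X i |
          (∀ i, x i ∈ A i) ∧ ∑ i, dist (o i) (x i) ≤ r}).ncard : ℝ) / r)
      Filter.atTop = ⨆ i, δ i := by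
  classical
  haveI : Nonempty (Fin n) := ⟨⟨0, hn⟩⟩
  -- notation
  set P : Fin n → ℝ → ℝ := fun i r => ((A i ∩ Metric.closedBall (o i) r).ncard : ℝ) with hPdef
  set Q : ℝ → ℝ := fun r =>
    (({x : ∀ i, X i | (∀ i, x i ∈ A i) ∧ ∑ i, dist (o i) (x i) ≤ r}).ncard : ℝ) with hQdef
  show Filter.limsup (fun r : ℝ => Real.log (Q r) / r) Filter.atTop = ⨆ i, δ i
  -- basepoint-like elements
  have hex : ∀ j, ∃ y, y ∈ A j ∩ Metric.closedBall (o j) 0 := by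
    intro j
    have h := hone j 0 le_rfl
    have hne : (A j ∩ Metric.closedBall (o j) 0).ncard ≠ 0 := by
      intro h0; rw [h0] at h; norm_num at h
    exact Set.nonempty_of_ncard_ne_zero hne
  obtain ⟨a, ha⟩ : ∃ a : ∀ j, X j, ∀ j, a j ∈ A j ∩ Metric.closedBall (o j) 0 :=
    ⟨fun j => (hex j).choose, fun j => (hex j).choose_spec⟩
  -- monotonicity of P
  have hPmono : ∀ i (s t : ℝ), s ≤ t → P i s ≤ P i t := by
    intro i s t h
    simp only [hPdef]
    exact_mod_cast Set.ncard_le_ncard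
      (Set.inter_subset_inter_right _ (Metric.closedBall_subset_closedBall h)) (hfin i t)
  have hP1 : ∀ i (r : ℝ), 0 ≤ r → 1 ≤ P i r := fun i r hr => hone i r hr
  have hLPmono : ∀ i (s t : ℝ), 0 ≤ s → s ≤ t → Real.log (P i s) ≤ Real.log (P i t) :=
    fun i s t hs h =>
      Real.log_le_log (lt_of_lt_of_le zero_lt_one (hP1 i s hs)) (hPmono i s t h)
  have hP : ∀ i (r : ℝ), P i r = ((A i ∩ Metric.closedBall (o i) r).ncard : ℝ) :=
    fun _ _ => rfl
  have hQ : ∀ r : ℝ, Q r = (({x : ∀ i, X i |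
      (∀ i, x i ∈ A i) ∧ ∑ i, dist (o i) (x i) ≤ r}).ncard : ℝ) := fun _ => rfl
  have hsub' : ∀ i (m m' : ℝ), 0 ≤ m → 0 ≤ m' →
      Real.log (P i (m + m')) ≤ Real.log (P i m) + Real.log (P i m') + b := by
    intro i m m' hm hm'; simpa only [← hP] using hsub i m m' hm hm'
  have hgrowth' : ∀ i, Filter.limsup (fun r : ℝ => Real.log (P i r) / r)
      Filter.atTop = δ i := by
    intro i; simpa only [← hP] using hgrowth i
  have hLPlin : ∀ i (r : ℝ), 0 ≤ r →
      Real.log (P i r) ≤ (r + 1) * (Real.log (P i 1) + b) + Real.log (P i 0) :=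
    fun i r hr => lin_of_subadd (fun r => Real.log (P i r)) b
      (fun s t hs h => hLPmono i s t hs h) (hsub' i) r hr
  have hD0 : ∀ i, 0 ≤ Real.log (P i 0) := fun i => Real.log_nonneg (hP1 i 0 le_rfl)
  have hK0 : ∀ i, 0 ≤ Real.log (P i 1) + b := by
    intro i
    have h1 := hsub' i 0 0 le_rfl le_rfl
    have h2 := hLPmono i 0 1 le_rfl zero_le_one
    simp only [add_zero] at h1
    linarith
  have hQ1 : ∀ r : ℝ, 0 ≤ r → 1 ≤ Q r := by
    intro r hr
    have h := l1prod_lower_aux n X o A hfin a ha ⟨0, hn⟩ r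
    have h2 := hone ⟨0, hn⟩ r hr
    rw [hQ]
    calc (1:ℝ) ≤ _ := h2
      _ ≤ _ := by exact_mod_cast h
  -- boundedness of the coordinate growth quotients
  have hbdd : ∀ i, Filter.IsBoundedUnder (· ≤ ·) Filter.atTop
      (fun r : ℝ => Real.log (P i r) / r) := by
    intro i
    apply isBoundedUnder_of_eventually_le
      (a := 2 * (Real.log (P i 1) + b) + Real.log (P i 0))
    filter_upwards [eventually_ge_atTop (1:ℝ)] with r hr
    have h1 := hLPlin i r (by linarith)
    rw [div_le_iff₀ (by linarith : (0:ℝ) < r)]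
    nlinarith [hK0 i, hD0 i]
  -- ε-linear upper bounds on each log Pᵢ
  have heps : ∀ ε : ℝ, 0 < ε → ∀ i, ∃ C : ℝ, 0 ≤ C ∧
      ∀ r : ℝ, 0 ≤ r → Real.log (P i r) ≤ (δ i + ε) * r + C := by
    intro ε hε i
    have hls : Filter.limsup (fun r : ℝ => Real.log (P i r) / r) Filter.atTop
        < δ i + ε := by rw [hgrowth' i]; linarith
    have hev := Filter.eventually_lt_of_limsup_lt hls (hbdd i)
    rw [Filter.eventually_atTop] at hev
    obtain ⟨R₀, hR₀⟩ := hev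
    set R := max R₀ 1 with hRdef
    have hR1 : (1:ℝ) ≤ R := le_max_right _ _
    have hRbound : ∀ r : ℝ, R ≤ r → Real.log (P i r) ≤ (δ i + ε) * r := by
      intro r hr
      have h := hR₀ r (le_trans (le_max_left _ _) hr)
      have hrpos : (0:ℝ) < r := lt_of_lt_of_le zero_lt_one (le_trans hR1 hr)
      rw [div_lt_iff₀ hrpos] at h
      linarith
    have hC0 : 0 ≤ (δ i + ε) * R := mul_nonneg (by linarith [hδ i]) (by linarith)
    refine ⟨(δ i + ε) * R, hC0, ?_⟩
    intro r hr
    rcases le_total R r with h | h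
    · have := hRbound r h; linarith
    · have h2 : Real.log (P i r) ≤ Real.log (P i R) := hLPmono i r R hr h
      have h3 := hRbound R le_rfl
      have h4 : 0 ≤ (δ i + ε) * r := mul_nonneg (by linarith [hδ i]) hr
      linarith
  have hδm : ∀ i, δ i ≤ ⨆ j, δ j :=
    fun i => le_ciSup (Set.Finite.bddAbove (Set.finite_range δ)) i
  have hδm0 : 0 ≤ ⨆ j, δ j := le_trans (hδ ⟨0, hn⟩) (hδm ⟨0, hn⟩)
  -- the main eventual upper bound
  have hupper : ∀ ε : ℝ, 0 < ε →
      ∀ᶠ r : ℝ in Filter.atTop, Real.log (Q r) / r ≤ (⨆ j, δ j) + ε := by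
    intro ε hε
    have hε3 : 0 < ε/3 := by linarith
    choose C hC0 hC using heps (ε/3) hε3
    set δm := ⨆ j, δ j with hδmdef
    set C' := ∑ i, C i with hC'def
    have hC'0 : 0 ≤ C' := Finset.sum_nonneg (fun i _ => hC0 i)
    have hcount : ∀ r : ℝ, 0 ≤ r →
        Q r ≤ ((⌈r⌉₊ + 1) ^ n : ℕ) * Real.exp ((δm + ε/3) * (r + n) + C') := by
      intro r hr
      rw [hQ]
      apply l1prod_count_aux n X o A hfin r _ (Real.exp_nonneg _)
      intro m hm
      have hprod : (∏ i, ((A i ∩ Metric.closedBall (o i) ((m i : ℕ) : ℝ)).ncard : ℝ))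
          = Real.exp (∑ i, Real.log (P i ((m i : ℕ) : ℝ))) := by
        rw [Real.exp_sum]
        refine Finset.prod_congr rfl (fun i _ => ?_)
        exact (Real.exp_log
          (lt_of_lt_of_le zero_lt_one (hP1 i ((m i : ℕ) : ℝ) (Nat.cast_nonneg _)))).symm
      rw [hprod]
      apply Real.exp_le_exp.2
      have hδme : 0 ≤ δm + ε/3 := by linarith
      calc ∑ i, Real.log (P i ((m i : ℕ) : ℝ))
          ≤ ∑ i, ((δ i + ε/3) * ((m i : ℕ) : ℝ) + C i) :=
            Finset.sum_le_sum (fun i _ => hC i ((m i : ℕ) : ℝ) (Nat.cast_nonneg _))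
        _ ≤ ∑ i, ((δm + ε/3) * ((m i : ℕ) : ℝ) + C i) := by
            refine Finset.sum_le_sum (fun i _ => ?_)
            have h1 := hδm i
            have h2 : (0:ℝ) ≤ ((m i : ℕ) : ℝ) := Nat.cast_nonneg _
            nlinarith
        _ = (δm + ε/3) * (∑ i, ((m i : ℕ) : ℝ)) + C' := by
            rw [Finset.sum_add_distrib, ← Finset.mul_sum]
        _ ≤ (δm + ε/3) * (r + n) + C' := by nlinarith
    have hlog_small : ∀ᶠ r : ℝ in Filter.atTop,
        (n : ℝ) * Real.log (r + 2) ≤ ε/3 * r := by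
      have hcpos : 0 < ε / (3 * (2 * (n:ℝ) + 2)) := by positivity
      have hlo := Real.isLittleO_log_id_atTop.def hcpos
      have hcomp : Filter.Tendsto (fun r : ℝ => r + 2) Filter.atTop Filter.atTop :=
        tendsto_atTop_add_const_right _ 2 Filter.tendsto_id
      filter_upwards [hcomp.eventually hlo, eventually_ge_atTop (2:ℝ)] with r hr h2
      have hr0 : (0:ℝ) ≤ r := by linarith
      have h3 : Real.log (r + 2) ≤ ε / (3 * (2 * (n:ℝ) + 2)) * (r + 2) := by
        calc Real.log (r+2) ≤ |Real.log (r+2)| := le_abs_self _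
          _ ≤ ε / (3 * (2 * (n:ℝ) + 2)) * |r+2| := by
              simpa [Real.norm_eq_abs] using hr
          _ = ε / (3 * (2 * (n:ℝ) + 2)) * (r+2) := by rw [abs_of_nonneg (by linarith)]
      have h4 : Real.log (r + 2) ≤ ε / (3 * (2 * (n:ℝ) + 2)) * (2*r) := by
        have := mul_le_mul_of_nonneg_left (show r + 2 ≤ 2*r by linarith)
          (le_of_lt hcpos)
        linarith
      have key : (n:ℝ) * (ε / (3 * (2 * (n:ℝ) + 2)) * 2) ≤ ε/3 := by
        have h2n : (0:ℝ) < 3 * (2 * (n:ℝ) + 2) := by positivity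
        have heq : (n:ℝ) * (ε / (3 * (2 * (n:ℝ) + 2)) * 2)
            = ε * (2*(n:ℝ)) / (3 * (2 * (n:ℝ) + 2)) := by ring
        rw [heq, div_le_div_iff₀ h2n (by norm_num : (0:ℝ) < 3)]
        nlinarith [hε.le, Nat.cast_nonneg (α := ℝ) n]
      calc (n:ℝ) * Real.log (r+2)
          ≤ (n:ℝ) * (ε / (3 * (2 * (n:ℝ) + 2)) * (2*r)) :=
            mul_le_mul_of_nonneg_left h4 (Nat.cast_nonneg _)
        _ = ((n:ℝ) * (ε / (3 * (2 * (n:ℝ) + 2)) * 2)) * r := by ring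
        _ ≤ ε/3 * r := mul_le_mul_of_nonneg_right key hr0
    filter_upwards [hlog_small, eventually_ge_atTop (1:ℝ),
      eventually_ge_atTop (3 * ((δm + ε/3) * n + C') / ε)] with r hlog hr1 hrK
    have hr0 : (0:ℝ) < r := by linarith
    have h1 := hcount r hr0.le
    have hQpos : 0 < Q r := lt_of_lt_of_le zero_lt_one (hQ1 r hr0.le)
    have hlogQ : Real.log (Q r)
        ≤ (n:ℝ) * Real.log (r+2) + ((δm + ε/3) * (r + n) + C') := by
      calc Real.log (Q r)
          ≤ Real.log (((⌈r⌉₊ + 1) ^ n : ℕ) * Real.exp ((δm + ε/3) * (r + n) + C')) :=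
            Real.log_le_log hQpos h1
        _ ≤ (n:ℝ) * Real.log (r+2) + ((δm + ε/3) * (r + n) + C') := by
            rw [Real.log_mul (Nat.cast_ne_zero.2 (by positivity)) (Real.exp_ne_zero _),
              Real.log_exp]
            have hcast : (((⌈r⌉₊ + 1) ^ n : ℕ) : ℝ) = ((⌈r⌉₊ : ℝ) + 1) ^ n := by push_cast; ring
            rw [hcast, Real.log_pow]
            have hcl : ((⌈r⌉₊:ℝ) + 1) ≤ r + 2 := by
              have := Nat.ceil_lt_add_one hr0.le
              linarith
            have hlc := Real.log_le_log (by positivity) hcl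
            have := mul_le_mul_of_nonneg_left hlc (Nat.cast_nonneg (α := ℝ) n)
            linarith
    have h5 : (δm + ε/3) * n + C' ≤ ε/3 * r := by
      have hmul := mul_le_mul_of_nonneg_right hrK (le_of_lt (show (0:ℝ) < ε/3 by linarith))
      have heq : 3 * ((δm + ε/3) * n + C') / ε * (ε/3) = (δm + ε/3) * n + C' := by
        field_simp
      rw [heq] at hmul
      linarith
    rw [div_le_iff₀ hr0]
    have hexp : (δm + ε/3) * (r + n) = (δm + ε/3) * r + (δm + ε/3) * n := by ring
    nlinarith
  -- boundedness facts for the product quotient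
  have hgbdd : Filter.IsBoundedUnder (· ≤ ·) Filter.atTop
      (fun r : ℝ => Real.log (Q r) / r) :=
    isBoundedUnder_of_eventually_le (hupper 1 one_pos)
  have hcob : Filter.IsCoboundedUnder (· ≤ ·) Filter.atTop
      (fun r : ℝ => Real.log (Q r) / r) := by
    apply isCoboundedUnder_le_of_eventually_le Filter.atTop (x := 0)
    filter_upwards [eventually_ge_atTop (1:ℝ)] with r hr
    exact div_nonneg (Real.log_nonneg (hQ1 r (by linarith))) (by linarith)
  apply le_antisymm
  · apply le_of_forall_pos_le_add
    intro ε hε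
    exact Filter.limsup_le_of_le hcob (hupper ε hε)
  · refine ciSup_le (fun i => ?_)
    rw [← hgrowth' i]
    apply Filter.limsup_le_limsup _ _ hgbdd
    · filter_upwards [eventually_ge_atTop (1:ℝ)] with r hr
      have hr0 : (0:ℝ) < r := by linarith
      have hPQ : P i r ≤ Q r := by
        rw [hP, hQ]; exact_mod_cast l1prod_lower_aux n X o A hfin a ha i r
      have hlog : Real.log (P i r) ≤ Real.log (Q r) :=
        Real.log_le_log (lt_of_lt_of_le zero_lt_one (hP1 i r hr0.le)) hPQ
      exact (div_le_div_iff_of_pos_right hr0).2 hlog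
    · apply isCoboundedUnder_le_of_eventually_le Filter.atTop (x := 0)
      filter_upwards [eventually_ge_atTop (1:ℝ)] with r hr
      exact div_nonneg (Real.log_nonneg (hP1 i r (by linarith))) (by linarith)
end

section
/- Let F be a free group with finite free generating set S, let N be a nontrivial normal subgroup of G = F × F, and suppose N projects nontrivially to both factors, witnessed by (h₁,h₂) ∈ N with h₁ ≠ 1 ≠ h₂. Let A be a minimal section of G → G/N with respect to the L^∞ word metric (i.e., each a ∈ A has minimal ‖·‖_∞-length in its coset aN). Then A ⊆ (F \ W(h₁)) × F ∪ F × (F \ W(h₂)), where W(f) is the set of elements of F whose reduced word contains f as a subword. -/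
private lemma reduce_middle {α : Type*} [DecidableEq α]
    (l₁ l₂ l₃ : List (α × Bool))
    (h : FreeGroup.reduce (l₁ ++ l₂ ++ l₃) = l₁ ++ l₂ ++ l₃) :
    FreeGroup.reduce l₂ = l₂ := by
  by_contra hne
  have hr : FreeGroup.Red l₂ (FreeGroup.reduce l₂) := FreeGroup.reduce.red
  have hlt : (FreeGroup.reduce l₂).length < l₂.length := by
    have hle := hr.length_le
    rcases lt_or_eq_of_le hle with h' | h'
    · exact h'
    · exact absurd (hr.sublist.eq_of_length h') hne
  have hred : FreeGroup.Red (l₁ ++ l₂ ++ l₃) (l₁ ++ FreeGroup.reduce l₂ ++ l₃) :=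
    FreeGroup.Red.append_append
      (FreeGroup.Red.append_append FreeGroup.Red.refl hr) FreeGroup.Red.refl
  have heq := FreeGroup.reduce.eq_of_red hred
  rw [h] at heq
  have := (FreeGroup.reduce.red (L := l₁ ++ FreeGroup.reduce l₂ ++ l₃)).length_le
  rw [← heq] at this
  simp only [List.length_append] at this
  omega

private lemma mk_infix_split {α : Type*} [DecidableEq α]
    (h x : FreeGroup α) (hinf : h.toWord <:+: x.toWord) :
    ∃ u v : FreeGroup α, x = u * h * v ∧
      ((u * v).toWord.length + h.toWord.length ≤ x.toWord.length) := by
  obtain ⟨s, t, hst⟩ := hinf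
  have hred : FreeGroup.reduce x.toWord = x.toWord := FreeGroup.reduce_toWord x
  have hs : FreeGroup.reduce s = s := by
    apply reduce_middle [] s (h.toWord ++ t)
    simp only [List.nil_append, ← List.append_assoc, hst]
    exact hred
  have ht : FreeGroup.reduce t = t := by
    apply reduce_middle (s ++ h.toWord) t []
    simp only [List.append_nil, hst]
    exact hred
  refine ⟨FreeGroup.mk s, FreeGroup.mk t, ?_, ?_⟩
  · have hmk : FreeGroup.mk s * h * FreeGroup.mk t
        = FreeGroup.mk (s ++ h.toWord ++ t) := by
      conv_lhs => rw [← FreeGroup.mk_toWord (x := h)]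
      rw [FreeGroup.mul_mk, FreeGroup.mul_mk]
    rw [hmk, hst, FreeGroup.mk_toWord]
  · have hls : (FreeGroup.mk s).toWord = s := by simp [FreeGroup.toWord_mk, hs]
    have hlt : (FreeGroup.mk t).toWord = t := by simp [FreeGroup.toWord_mk, ht]
    have hsubl := (FreeGroup.toWord_mul_sublist (FreeGroup.mk s) (FreeGroup.mk t)).length_le
    rw [hls, hlt, List.length_append] at hsubl
    have hx : s.length + h.toWord.length + t.length = x.toWord.length := by
      rw [← hst]; simp [List.length_append]; omega
    omega

/-- Let `N` be a normal subgroup of `F × F` (for `F` a free group) containing an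
element `(h₁, h₂)` with both coordinates nontrivial.  If `A` is a minimal section
of `F × F → (F × F)/N` with respect to the `L^∞` word metric (each `a ∈ A` has
minimal `‖·‖_∞`-length in its coset `aN`, and every coset is represented), then
every element of `A` avoids `h₁` as a subword in its first coordinate or avoids
`h₂` as a subword in its second coordinate, i.e.
`A ⊆ (F ∖ W(h₁)) × F ∪ F × (F ∖ W(h₂))`. -/
theorem minimal_section_avoids_subwords
    (α : Type*) [DecidableEq α]
    (N : Subgroup (FreeGroup α × FreeGroup α)) [N.Normal]
    (h₁ h₂ : FreeGroup α) (hN : (h₁, h₂) ∈ N) (hh₁ : h₁ ≠ 1) (hh₂ : h₂ ≠ 1)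
    (A : Set (FreeGroup α × FreeGroup α))
    (hsec : ∀ g : FreeGroup α × FreeGroup α, ∃ a ∈ A, g⁻¹ * a ∈ N)
    (hmin : ∀ a ∈ A, ∀ m ∈ N,
      max (a.1).toWord.length (a.2).toWord.length ≤
        max ((a * m).1).toWord.length ((a * m).2).toWord.length) :
    A ⊆ {g : FreeGroup α × FreeGroup α |
        ¬ h₁.toWord <:+: g.1.toWord ∨ ¬ h₂.toWord <:+: g.2.toWord} := by
  intro a ha
  by_contra hc
  simp only [Set.mem_setOf_eq, not_or, not_not] at hc
  obtain ⟨hc1, hc2⟩ := hc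
  obtain ⟨u₁, v₁, he1, hs1⟩ := mk_infix_split h₁ a.1 hc1
  obtain ⟨u₂, v₂, he2, hs2⟩ := mk_infix_split h₂ a.2 hc2
  have hne1 : 0 < h₁.toWord.length := List.length_pos_iff.mpr
    (fun h => hh₁ (FreeGroup.toWord_eq_nil_iff.mp h))
  have hne2 : 0 < h₂.toWord.length := List.length_pos_iff.mpr
    (fun h => hh₂ (FreeGroup.toWord_eq_nil_iff.mp h))
  set m : FreeGroup α × FreeGroup α := (v₁, v₂)⁻¹ * (h₁, h₂)⁻¹ * (v₁, v₂) with hm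
  have hmN : m ∈ N := by
    have : (v₁, v₂)⁻¹ * (h₁, h₂)⁻¹ * ((v₁, v₂)⁻¹)⁻¹ ∈ N :=
      Subgroup.Normal.conj_mem ‹N.Normal› _ (N.inv_mem hN) _
    simpa [hm] using this
  have ham : a * m = (u₁ * v₁, u₂ * v₂) := by
    have haeq : a = (u₁ * h₁ * v₁, u₂ * h₂ * v₂) := by
      ext <;> simp [he1, he2]
    rw [haeq, hm]
    ext <;> simp [Prod.mul_def] <;> group
  have := hmin a ha m hmN
  rw [ham] at this
  simp only at this
  omega
end
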